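/- For every m ≥ 1 and i ∈ {1,2}, the envelope word E_{m+1,i} equals σ(E_{m,i}) followed by the single letter a, i.e., E_{m+1,i} = σ(E_{m,i})·a. -/

import Mathlib

namespace PD

/-- The period-doubling substitution on the alphabet `Bool`,
where `false` stands for the letter `a` and `true` for the letter `b`:
`σ(a) = ab`, `σ(b) = aa`. -/
def sub : Bool → List Bool
  | false => [false, true]
  | true  => [false, false]

/-- The substitution applied to a finite word. -/
def subW (w : List Bool) : List Bool := w.flatMap sub

/-- `A m = σ^m(a)`. -/
def A (m : ℕ) : List Bool := subW^[m] [false]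

/-- `B m = σ^m(b)`. -/
def B (m : ℕ) : List Bool := subW^[m] [true]

/-- The doubling sequence `D∞` (0-indexed: `D n` is the `(n+1)`-th letter),
the fixed point of `σ` beginning with `a`; `A m` is a prefix of `A (m+1)`,
and `A (n+1)` has length `2^(n+1) > n`. -/
def D (n : ℕ) : Bool := (A (n + 1)).getD n false

/-- `δ m`, the last letter of `A m`. -/
def delta (m : ℕ) : Bool := (A m).getLastD false

/-- The envelope words (`i ∈ {1,2}`): `E m 1 = A m` minus its last letter,
`E m 2 = A (m-1) ++ (A m` minus its last letter `)`. -/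
def E (m i : ℕ) : List Bool :=
  if i = 1 then (A m).dropLast else A (m - 1) ++ (A m).dropLast

/-- `w` occurs at the (1-indexed) position `j` in the finite word `τ`. -/
def OccursIn (w τ : List Bool) (j : ℕ) : Prop :=
  1 ≤ j ∧ (τ.drop (j - 1)).take w.length = w

/-- `w` occurs at the (1-indexed) position `j` in the doubling sequence. -/
def OccursD (w : List Bool) (j : ℕ) : Prop :=
  1 ≤ j ∧ ∀ k < w.length, D (j - 1 + k) = w.getD k false

/-- `w` is a factor of the doubling sequence. -/
def FactorD (w : List Bool) : Prop := ∃ j, OccursD w j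

/-- `L w p`: the (1-indexed) starting position of the `p`-th occurrence of `w`
in the doubling sequence, occurrences being ordered by starting position.
(Each factor occurs infinitely often, so `Nat.nth` enumerates all occurrences
in increasing order.) -/
noncomputable def L (w : List Bool) (p : ℕ) : ℕ := Nat.nth (OccursD w) (p - 1)

/-- The strict total order on envelope words:
`E m₁ i₁ ⊏ E m₂ i₂` iff `m₁ < m₂`, or `m₁ = m₂` and `i₁ < i₂`. -/
def EnvLt (m₁ i₁ m₂ i₂ : ℕ) : Prop := m₁ < m₂ ∨ (m₁ = m₂ ∧ i₁ < i₂)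

/-- `Env(w) = E m i`: the envelope word `E m i` is the `⊏`-minimal envelope
word containing `w` as a factor. -/
def IsEnv (w : List Bool) (m i : ℕ) : Prop :=
  1 ≤ m ∧ (i = 1 ∨ i = 2) ∧ w <:+: E m i ∧
    ∀ m' i', 1 ≤ m' → (i' = 1 ∨ i' = 2) → EnvLt m' i' m i → ¬ w <:+: E m' i'

/-- The substitution `φ₁(a) = a`, `φ₁(b) = bb`. -/
def phi1 : Bool → List Bool
  | false => [false]
  | true  => [true, true]

/-- `Θ₁ = φ₁(D∞)` (0-indexed): `φ₁(A (n+1))` is a prefix of `Θ₁` of length `> n`. -/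
def Theta1 (n : ℕ) : Bool := ((A (n + 1)).flatMap phi1).getD n false

/-- The substitution `φ₂(a) = ab`, `φ₂(b) = acac`, over the alphabet `Fin 3`
where `0` stands for `a`, `1` for `b` and `2` for `c`. -/
def phi2 : Bool → List (Fin 3)
  | false => [0, 1]
  | true  => [0, 2, 0, 2]

/-- `Θ₂ = φ₂(D∞)` (0-indexed). -/
def Theta2 (n : ℕ) : Fin 3 := ((A (n + 1)).flatMap phi2).getD n 0

/-- `N₁(x,p)`: the number of letters `x` among the first `p` letters of `Θ₁`. -/
def N1 (x : Bool) (p : ℕ) : ℕ := ((List.range p).map Theta1).count x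

/-- `N₂(x,p)`: the number of letters `x` among the first `p` letters of `Θ₂`. -/
def N2 (x : Fin 3) (p : ℕ) : ℕ := ((List.range p).map Theta2).count x

end PD

open PD
namespace PD

@[simp]
lemma subW_append (u v : List Bool) : subW (u ++ v) = subW u ++ subW v :=
  List.flatMap_append

lemma A_succ (m : ℕ) : A (m + 1) = subW (A m) :=
  Function.iterate_succ_apply' subW m [false]

lemma subW_ne_nil {w : List Bool} (hw : w ≠ []) : subW w ≠ [] := by
  obtain ⟨c, t, rfl⟩ := List.exists_cons_of_ne_nil hw
  cases c <;> simp [subW, sub]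

lemma A_ne_nil (m : ℕ) : A m ≠ [] := by
  induction m with
  | zero => simp [A]
  | succ m ih => exact A_succ m ▸ subW_ne_nil ih

/-- Every letter is sent to `a` followed by one more letter. -/
lemma dropLast_subW {w : List Bool} (hw : w ≠ []) :
    (subW w).dropLast = subW w.dropLast ++ [false] := by
  conv_lhs => rw [← w.dropLast_append_getLast hw, subW_append]
  cases w.getLast hw <;> simp [subW, sub]

lemma dropLast_A_succ (m : ℕ) : (A (m + 1)).dropLast = subW (A m).dropLast ++ [false] := by
  rw [A_succ, dropLast_subW (A_ne_nil m)]

end PD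

theorem doubling_envelope_subst_general (m : ℕ) (hm : 1 ≤ m) (i : ℕ) :
    E (m + 1) i = subW (E m i) ++ [false] := by
  obtain ⟨k, rfl⟩ := Nat.exists_eq_add_of_le' hm
  by_cases hi : i = 1
  · simp only [E, if_pos hi, dropLast_A_succ]
  · simp only [E, if_neg hi, Nat.add_sub_cancel, dropLast_A_succ, subW_append, ← A_succ,
      List.append_assoc]

/-- For every `m ≥ 1` and `i ∈ {1,2}`, `E (m+1) i = σ(E m i)·a`. -/
theorem doubling_envelope_subst (m : ℕ) (hm : 1 ≤ m) (i : ℕ) (hi : i = 1 ∨ i = 2) :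
    E (m + 1) i = subW (E m i) ++ [false] :=
  doubling_envelope_subst_general m hm i
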